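/- The Ladder mechanism is 1-approximate for m = 4, (3/2)-approximate for m = 5, and (5/3)-approximate for m = 6: for every n and every preference profile P on n voters and m projects, Σ_{j=1}^m |A(P)_j − P̄_j| is at most 1 when m = 4, at most 3/2 when m = 5, and at most 5/3 when m = 6, where A is the Ladder mechanism. -/

import Mathlib

open Finset

/-- With the convention used here, for a multiset of `2n+1` real numbers,
`med n s` is the `(n+1)`-st smallest element, i.e. the median. -/
noncomputable def med (n : ℕ) (s : Multiset ℝ) : ℝ :=
  (s.sort (· ≤ ·)).getD n 0

/-- The median of the `n+1` phantom values `phantoms 0, …, phantoms n`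
together with the `n` votes. -/
noncomputable def projMed (n : ℕ) (phantoms : ℕ → ℝ) (votes : Fin n → ℝ) : ℝ :=
  med n ((Multiset.range (n + 1)).map phantoms + Finset.univ.val.map votes)

/-- `P` is a preference profile: every entry lies in `[0,1]` and every row
lies in the standard simplex. -/
def IsProfile {n m : ℕ} (P : Fin n → Fin m → ℝ) : Prop :=
  (∀ i j, P i j ∈ Set.Icc (0 : ℝ) 1) ∧ ∀ i, ∑ j, P i j = 1

/-- The mean funding of project `j` in profile `P`. -/
noncomputable def mean {n m : ℕ} (P : Fin n → Fin m → ℝ) (j : Fin m) : ℝ :=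
  (∑ i, P i j) / (n : ℝ)

/-- `t` is a normalization point for the phantoms `f 0, …, f n` and profile `P`. -/
def IsNormPoint {n m : ℕ} (f : ℕ → ℝ → ℝ) (P : Fin n → Fin m → ℝ) (t : ℝ) : Prop :=
  t ∈ Set.Icc (0 : ℝ) 1 ∧
    ∑ j, projMed n (fun k => f k t) (fun i => P i j) = 1

/-- The output of the moving phantom mechanism with phantoms `f` on profile `P`,
evaluated at (normalization) point `t`, for project `j`. -/
noncomputable def output {n m : ℕ} (f : ℕ → ℝ → ℝ) (P : Fin n → Fin m → ℝ)
    (t : ℝ) (j : Fin m) : ℝ :=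
  projMed n (fun k => f k t) (fun i => P i j)

/-- `f 0, …, f n` is a phantom system for `n` voters. -/
structure IsPhantomSystem (n : ℕ) (f : ℕ → ℝ → ℝ) : Prop where
  continuousOn : ∀ k ≤ n, ContinuousOn (f k) (Set.Icc 0 1)
  monotoneOn : ∀ k ≤ n, MonotoneOn (f k) (Set.Icc 0 1)
  mem_Icc : ∀ k ≤ n, ∀ t ∈ Set.Icc (0 : ℝ) 1, f k t ∈ Set.Icc (0 : ℝ) 1
  map_zero : ∀ k ≤ n, f k 0 = 0
  map_one : ∀ k ≤ n, f k 1 = 1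
  ordered : ∀ k l, k ≤ l → l ≤ n → ∀ t ∈ Set.Icc (0 : ℝ) 1, f l t ≤ f k t

/-- The phantom system of the Ladder mechanism for `n` voters. -/
noncomputable def ladder (n : ℕ) (k : ℕ) (t : ℝ) : ℝ :=
  max (t - (k : ℝ) / (n : ℝ)) 0

/-- The phantom system of the Independent Markets mechanism for `n` voters. -/
noncomputable def indMarkets (n : ℕ) (k : ℕ) (t : ℝ) : ℝ :=
  t * ((n : ℝ) - (k : ℝ)) / (n : ℝ)

/-- The moving phantom mechanism given by the family `F` of phantom systems
overfunds by at most `α`. -/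
def OverfundsByAtMost (F : ℕ → ℕ → ℝ → ℝ) (α : ℕ → ℕ → ℝ) : Prop :=
  ∀ n m : ℕ, 0 < n → 0 < m → ∀ P : Fin n → Fin m → ℝ, IsProfile P →
    ∀ t, IsNormPoint (F n) P t → ∀ j, output (F n) P t j - mean P j ≤ α n m

/-- The moving phantom mechanism given by the family `F` of phantom systems
underfunds by at most `α`. -/
def UnderfundsByAtMost (F : ℕ → ℕ → ℝ → ℝ) (α : ℕ → ℕ → ℝ) : Prop :=
  ∀ n m : ℕ, 0 < n → 0 < m → ∀ P : Fin n → Fin m → ℝ, IsProfile P →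
    ∀ t, IsNormPoint (F n) P t → ∀ j, mean P j - output (F n) P t j ≤ α n m

/-- The moving phantom mechanism given by the family `F` of phantom systems
is proportional: on profiles of single-minded voters it outputs the mean. -/
def Proportional (F : ℕ → ℕ → ℝ → ℝ) : Prop :=
  ∀ n m : ℕ, 0 < n → 0 < m → ∀ P : Fin n → Fin m → ℝ, IsProfile P →
    (∀ i j, P i j = 0 ∨ P i j = 1) →
    ∀ t, IsNormPoint (F n) P t → ∀ j, output (F n) P t j = mean P j

/-- The moving phantom mechanism given by the family `F` of phantom systems
is zero-unanimous. -/
def ZeroUnanimous (F : ℕ → ℕ → ℝ → ℝ) : Prop :=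
  ∀ n m : ℕ, 0 < n → 0 < m → ∀ P : Fin n → Fin m → ℝ, IsProfile P →
    ∀ j : Fin m, (∀ i, P i j = 0) →
      ∀ t, IsNormPoint (F n) P t → output (F n) P t j = 0

lemma med_spec (n : ℕ) (S : Multiset ℝ) (h : Multiset.card S = 2*n+1) :
    (S.sort (· ≤ ·)).getD n 0 ∈ S ∧
    (n+1 : ℕ) ≤ Multiset.card (S.filter (fun x => x ≤ (S.sort (· ≤ ·)).getD n 0)) ∧
    (n+1 : ℕ) ≤ Multiset.card (S.filter (fun x => (S.sort (· ≤ ·)).getD n 0 ≤ x)) := by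
  set l := S.sort (· ≤ ·) with hldef
  have hlen : l.length = 2*n+1 := by rw [hldef, Multiset.length_sort, h]
  have hn : n < l.length := by omega
  have hs : List.Pairwise (· ≤ ·) l := Multiset.pairwise_sort S _
  have hSl : (l : Multiset ℝ) = S := Multiset.sort_eq S _
  have hgd : l.getD n 0 = l[n] := List.getD_eq_getElem _ _ hn
  set a := l.getD n 0 with hadef
  have hmono : ∀ (i j : ℕ) (hi : i ≤ j) (hj : j < l.length), l[i]'(by omega) ≤ l[j] := by
    intro i j hi hj
    rcases eq_or_lt_of_le hi with rfl | hlt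
    · exact le_refl _
    · exact List.Pairwise.rel_get_of_lt hs (by simpa using hlt)
  refine ⟨?_, ?_, ?_⟩
  · show a ∈ S
    rw [hgd, ← hSl]
    exact Multiset.mem_coe.mpr (List.getElem_mem hn)
  · have hsub : (↑(l.take (n+1)) : Multiset ℝ) ≤ S.filter (fun x => x ≤ a) := by
      rw [Multiset.le_filter]
      constructor
      · rw [← hSl]
        exact ((l.take_sublist (n+1)).subperm : _)
      · intro x hx
        rw [Multiset.mem_coe, List.mem_take_iff_getElem] at hx
        obtain ⟨i, hi, rfl⟩ := hx
        rw [hgd]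
        exact hmono i n (by omega) hn
    have hc := Multiset.card_le_card hsub
    rw [Multiset.coe_card, List.length_take] at hc
    omega
  · have hsub : (↑(l.drop n) : Multiset ℝ) ≤ S.filter (fun x => a ≤ x) := by
      rw [Multiset.le_filter]
      constructor
      · rw [← hSl]
        exact ((l.drop_sublist n).subperm : _)
      · intro x hx
        rw [Multiset.mem_coe, List.mem_drop_iff_getElem] at hx
        obtain ⟨i, hi, rfl⟩ := hx
        rw [hgd]
        exact hmono n (n+i) (by omega) (by omega)
    have hc := Multiset.card_le_card hsub
    rw [Multiset.coe_card, List.length_drop] at hc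
    omega

lemma filter_card_split (n : ℕ) (φ : ℕ → ℝ) (v : Fin n → ℝ) (p : ℝ → Prop) [DecidablePred p] :
    Multiset.card (((((Multiset.range (n+1)).map φ) + Finset.univ.val.map v)).filter p)
    = ((Finset.range (n+1)).filter (fun k => p (φ k))).card
      + (Finset.univ.filter (fun i => p (v i))).card := by
  rw [Multiset.filter_add, Multiset.card_add]
  congr 1
  · rw [Multiset.filter_map, Multiset.card_map, ← Finset.range_val, ← Finset.filter_val,
      Finset.card_def]
    rfl
  · rw [Multiset.filter_map, Multiset.card_map, ← Finset.filter_val, Finset.card_def]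
    rfl

lemma card_S (n : ℕ) (φ : ℕ → ℝ) (v : Fin n → ℝ) :
    Multiset.card ((((Multiset.range (n+1)).map φ) + Finset.univ.val.map v)) = 2*n+1 := by
  rw [Multiset.card_add, Multiset.card_map, Multiset.card_map, Multiset.card_range]
  have : Multiset.card (Finset.univ.val : Multiset (Fin n)) = n := by
    rw [← Finset.card_def, Finset.card_univ, Fintype.card_fin]
  omega

lemma ladder_nonneg (n k : ℕ) (t : ℝ) : 0 ≤ ladder n k t := le_max_right _ _

lemma ladder_le (n k : ℕ) (t : ℝ) (ht : 0 ≤ t) (hn : 0 < n) : ladder n k t ≤ t := by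
  unfold ladder
  have : (k:ℝ)/(n:ℝ) ≥ 0 := by positivity
  exact max_le (by linarith) ht

lemma ph_count_ge (n : ℕ) (hn : 0 < n) (t a : ℝ) (ha : 0 < a) (hat : a ≤ t) :
    (((Finset.range (n+1)).filter (fun k => a ≤ ladder n k t)).card : ℝ) ≤ n*(t-a) + 1 := by
  have hnR : (0:ℝ) < n := by exact_mod_cast hn
  have hx0 : (0:ℝ) ≤ n*(t-a) := by nlinarith
  have hsub : (Finset.range (n+1)).filter (fun k => a ≤ ladder n k t)
      ⊆ Finset.range (⌊(n:ℝ)*(t-a)⌋₊ + 1) := by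
    intro k hk
    rw [Finset.mem_filter] at hk
    obtain ⟨-, hk2⟩ := hk
    rw [Finset.mem_range, Nat.lt_succ_iff]
    apply Nat.le_floor
    have : a ≤ t - (k:ℝ)/n := by
      rcases le_max_iff.mp hk2 with h | h
      · exact h
      · linarith
    have h4 : (k:ℝ)/n ≤ t - a := by linarith
    have := (div_le_iff₀ hnR).mp h4
    linarith
  have h1 := Finset.card_le_card hsub
  rw [Finset.card_range] at h1
  have h2 : ((⌊(n:ℝ)*(t-a)⌋₊ : ℝ)) ≤ n*(t-a) := Nat.floor_le hx0
  have h3 : (((Finset.range (n+1)).filter (fun k => a ≤ ladder n k t)).card : ℝ)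
      ≤ (⌊(n:ℝ)*(t-a)⌋₊ : ℝ) + 1 := by exact_mod_cast h1
  linarith

lemma ph_count_gt (n : ℕ) (hn : 0 < n) (t a : ℝ) (ht1 : t ≤ 1) (ha0 : 0 ≤ a) :
    (n:ℝ)*(t-a) ≤ (((Finset.range (n+1)).filter (fun k => a < ladder n k t)).card : ℝ) := by
  have hnR : (0:ℝ) < n := by exact_mod_cast hn
  set x := (n:ℝ)*(t-a) with hxdef
  rcases le_or_gt x 0 with hx | hx
  · have : (0:ℝ) ≤ (((Finset.range (n+1)).filter (fun k => a < ladder n k t)).card : ℝ) := by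
      positivity
    linarith
  · have hxn : x ≤ n := by nlinarith
    have hceil : (⌈x⌉₊ : ℝ) < x + 1 := Nat.ceil_lt_add_one (le_of_lt hx)
    have hceiln : ⌈x⌉₊ ≤ n := Nat.ceil_le.mpr hxn
    have hsub : Finset.range ⌈x⌉₊ ⊆ (Finset.range (n+1)).filter (fun k => a < ladder n k t) := by
      intro k hk
      rw [Finset.mem_range] at hk
      rw [Finset.mem_filter, Finset.mem_range]
      constructor
      · omega
      · have hk1 : (k:ℝ) + 1 ≤ (⌈x⌉₊ : ℝ) := by exact_mod_cast hk
        have hkx : (k:ℝ) < x := by linarith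
        have : a < t - (k:ℝ)/n := by
          have h5 : (k:ℝ)/n < t - a := (div_lt_iff₀ hnR).mpr (by linarith)
          linarith
        calc a < t - (k:ℝ)/n := this
        _ ≤ max (t - (k:ℝ)/n) 0 := le_max_left _ _
    have h1 := Finset.card_le_card hsub
    rw [Finset.card_range] at h1
    have h2 : x ≤ (⌈x⌉₊ : ℝ) := Nat.le_ceil x
    have h3 : ((⌈x⌉₊:ℕ):ℝ) ≤ (((Finset.range (n+1)).filter (fun k => a < ladder n k t)).card : ℝ) := by
      exact_mod_cast h1
    linarith

lemma sum_lower (n : ℕ) (v : Fin n → ℝ) (hv : ∀ i, 0 ≤ v i) (a : ℝ) (ha : 0 ≤ a) :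
    a * ((Finset.univ.filter (fun i => a ≤ v i)).card : ℝ) ≤ ∑ i, v i := by
  have h1 : ∑ i ∈ Finset.univ.filter (fun i => a ≤ v i), v i ≤ ∑ i, v i :=
    Finset.sum_le_sum_of_subset_of_nonneg (Finset.filter_subset _ _) (fun i _ _ => hv i)
  have h2 := Finset.card_nsmul_le_sum (Finset.univ.filter (fun i => a ≤ v i)) v a
    (fun i hi => (Finset.mem_filter.mp hi).2)
  rw [nsmul_eq_mul] at h2
  linarith [h2]

lemma sum_upper (n : ℕ) (v : Fin n → ℝ) (hv : ∀ i, v i ≤ 1) (a : ℝ) (ha : a ≤ 1) :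
    ∑ i, v i ≤ n*a + ((Finset.univ.filter (fun i => a < v i)).card : ℝ) * (1-a) := by
  classical
  have key : ∀ i, v i ≤ a + (if a < v i then (1:ℝ) - a else 0) := by
    intro i
    by_cases h : a < v i
    · simp [h]; linarith [hv i]
    · simp [h]; linarith [not_lt.mp h]
  calc ∑ i, v i ≤ ∑ i, (a + if a < v i then (1:ℝ) - a else 0) := Finset.sum_le_sum (fun i _ => key i)
  _ = n*a + ((Finset.univ.filter (fun i => a < v i)).card : ℝ) * (1-a) := by
      rw [Finset.sum_add_distrib, Finset.sum_const, Finset.sum_ite, Finset.sum_const,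
        Finset.sum_const]
      simp [mul_comm]

lemma proj_facts (n : ℕ) (hn : 0 < n) (t : ℝ) (ht0 : 0 ≤ t) (ht1 : t ≤ 1)
    (v : Fin n → ℝ) (hv : ∀ i, v i ∈ Set.Icc (0:ℝ) 1) :
    0 ≤ projMed n (fun k => ladder n k t) v ∧
    projMed n (fun k => ladder n k t) v ≤ t ∧
    projMed n (fun k => ladder n k t) v - (∑ i, v i)/n
      ≤ projMed n (fun k => ladder n k t) v * (t - projMed n (fun k => ladder n k t) v) ∧
    (∑ i, v i)/n - projMed n (fun k => ladder n k t) v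
      ≤ (1 - t + projMed n (fun k => ladder n k t) v)
        * (1 - projMed n (fun k => ladder n k t) v) := by
  classical
  have hnR : (0:ℝ) < n := by exact_mod_cast hn
  set S : Multiset ℝ :=
    (Multiset.range (n+1)).map (fun k => ladder n k t) + Finset.univ.val.map v with hSdef
  have hcard : Multiset.card S = 2*n+1 := card_S n _ v
  have hpm : projMed n (fun k => ladder n k t) v = (S.sort (· ≤ ·)).getD n 0 := rfl
  set a := (S.sort (· ≤ ·)).getD n 0 with hadef
  obtain ⟨hmem, hle, hge⟩ := med_spec n S hcard
  rw [hSdef, filter_card_split n _ v (fun x => x ≤ a)] at hle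
  rw [hSdef, filter_card_split n _ v (fun x => a ≤ x)] at hge
  -- counts
  set phLe := ((Finset.range (n+1)).filter (fun k => ladder n k t ≤ a)).card with hphLe
  set vLe := ((Finset.univ.filter (fun i => v i ≤ a)).card) with hvLe
  set phGe := ((Finset.range (n+1)).filter (fun k => a ≤ ladder n k t)).card with hphGe
  set vGe := ((Finset.univ.filter (fun i => a ≤ v i)).card) with hvGe
  set phGt := ((Finset.range (n+1)).filter (fun k => a < ladder n k t)).card with hphGt
  set vGt := ((Finset.univ.filter (fun i => a < v i)).card) with hvGtd
  have h0a : 0 ≤ a := by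
    rcases Multiset.mem_add.mp hmem with h | h
    · obtain ⟨k, -, hk⟩ := Multiset.mem_map.mp h
      have h0 := ladder_nonneg n k t
      rw [hk] at h0; exact h0
    · obtain ⟨i, -, hi⟩ := Multiset.mem_map.mp h
      have h0 := (hv i).1
      rw [hi] at h0; exact h0
  have hvGen : vGe ≤ n := by
    have := Finset.card_le_card (Finset.filter_subset (fun i => a ≤ v i) (Finset.univ : Finset (Fin n)))
    simpa using this
  have hat : a ≤ t := by
    have hph : 0 < phGe := by omega
    obtain ⟨k, hk⟩ := Finset.card_pos.mp hph
    rw [Finset.mem_filter] at hk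
    exact le_trans hk.2 (ladder_le n k t ht0 hn)
  have hvLen : vLe + vGt = n := by
    have h1 := Finset.card_filter_add_card_filter_not
      (s := (Finset.univ : Finset (Fin n))) (p := fun i => v i ≤ a)
    have h2 : (Finset.univ.filter (fun i => ¬ (v i ≤ a))) = Finset.univ.filter (fun i => a < v i) := by
      ext i; simp [not_le]
    rw [h2] at h1
    simpa using h1
  have hphLen : phLe + phGt = n+1 := by
    have h1 := Finset.card_filter_add_card_filter_not
      (s := Finset.range (n+1)) (p := fun k => ladder n k t ≤ a)
    have h2 : ((Finset.range (n+1)).filter (fun k => ¬ (ladder n k t ≤ a)))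
        = (Finset.range (n+1)).filter (fun k => a < ladder n k t) := by
      ext k; simp [not_le]
    rw [h2] at h1
    simpa using h1
  have hsum0 : 0 ≤ ∑ i, v i := Finset.sum_nonneg (fun i _ => (hv i).1)
  refine ⟨h0a, hat, ?_, ?_⟩
  · -- overfund bound
    rcases eq_or_lt_of_le h0a with heq | hpos
    · have : (0:ℝ) ≤ (∑ i, v i)/n := by positivity
      rw [hpm, ← heq]
      simpa using this
    · have hph := ph_count_ge n hn t a hpos hat
      have hgeR : (n:ℝ) + 1 ≤ (phGe:ℝ) + (vGe:ℝ) := by exact_mod_cast hge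
      have hvGeR : (n:ℝ)*(1-t+a) ≤ (vGe:ℝ) := by nlinarith [hph, hgeR]
      have hsl := sum_lower n v (fun i => (hv i).1) a h0a
      have hkey : a * ((n:ℝ)*(1-t+a)) ≤ ∑ i, v i := by nlinarith [hsl, hvGeR, h0a]
      have hdiv : a*(1-t+a) ≤ (∑ i, v i)/n := by
        rw [le_div_iff₀ hnR]
        nlinarith [hkey]
      have hring : a - a*(1-t+a) = a*(t-a) := by ring
      rw [hpm]
      linarith [hdiv]
  · -- underfund bound
    have hphgt := ph_count_gt n hn t a ht1 h0a
    have hnat : vGt + phGt ≤ n := by omega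
    have hvGtR : (vGt:ℝ) ≤ (n:ℝ) - (n:ℝ)*(t-a) := by
      have h1 : (vGt:ℝ) + (phGt:ℝ) ≤ (n:ℝ) := by exact_mod_cast hnat
      linarith [hphgt]
    have hsu := sum_upper n v (fun i => (hv i).2) a (le_trans hat ht1)
    have h1a : (0:ℝ) ≤ 1 - a := by linarith [le_trans hat ht1]
    have hkey : ∑ i, v i ≤ (n:ℝ)*a + ((n:ℝ) - (n:ℝ)*(t-a))*(1-a) := by nlinarith [hsu, hvGtR, h1a]
    have hdiv : (∑ i, v i)/n ≤ a + (1-t+a)*(1-a) := by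
      rw [div_le_iff₀ hnR]
      nlinarith [hkey]
    rw [hpm]
    linarith [hdiv]

lemma abstract_bound {m : ℕ} (C t : ℝ) (a p : Fin m → ℝ)
    (ht0 : 0 ≤ t) (ht1 : t ≤ 1)
    (ha0 : ∀ j, 0 ≤ a j) (hsa : ∑ j, a j = 1) (hsp : ∑ j, p j = 1)
    (h2 : ∀ j, a j - p j ≤ a j * (t - a j))
    (h3 : ∀ j, p j - a j ≤ (1 - t + a j) * (1 - a j))
    (hC : 0 ≤ C)
    (key : ∀ s : ℕ, 1 ≤ s → s + 1 ≤ m → ∀ A : ℝ, 0 ≤ A → A ≤ 1 →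
      2*((s:ℝ)*(1-t) + t*A - A^2/(s:ℝ)) ≤ C ∨
      2*(t*(1-A) - (1-A)^2/(((m-s : ℕ)):ℝ)) ≤ C) :
    ∑ j, |p j - a j| ≤ C := by
  classical
  set Sf := Finset.univ.filter (fun j => a j < p j) with hSf
  set Tf := Finset.univ.filter (fun j => ¬ a j < p j) with hTf
  set U := ∑ j ∈ Sf, (p j - a j) with hU
  set V := ∑ j ∈ Tf, (a j - p j) with hV
  have hsplit : ∀ f : Fin m → ℝ, (∑ j ∈ Sf, f j) + (∑ j ∈ Tf, f j) = ∑ j, f j := by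
    intro f
    exact Finset.sum_filter_add_sum_filter_not _ _ f
  have hUV : U = V := by
    have h0 : ∑ j, (p j - a j) = 0 := by
      rw [Finset.sum_sub_distrib, hsa, hsp]; ring
    have := hsplit (fun j => p j - a j)
    have hVneg : ∑ j ∈ Tf, (p j - a j) = -V := by
      rw [hV, ← Finset.sum_neg_distrib]
      apply Finset.sum_congr rfl
      intro j _; ring
    rw [hVneg] at this
    linarith [this, h0]
  have habs : ∑ j, |p j - a j| = U + V := by
    rw [← hsplit (fun j => |p j - a j|)]
    congr 1
    · apply Finset.sum_congr rfl
      intro j hj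
      rw [hSf, Finset.mem_filter] at hj
      exact abs_of_pos (by linarith [hj.2])
    · apply Finset.sum_congr rfl
      intro j hj
      rw [hTf, Finset.mem_filter] at hj
      rw [abs_of_nonpos (by linarith [not_lt.mp hj.2])]
      ring
  have hcards : Sf.card + Tf.card = m := by
    have h := Finset.card_filter_add_card_filter_not
      (s := (Finset.univ : Finset (Fin m))) (p := fun j => a j < p j)
    simp only [Finset.card_univ, Fintype.card_fin] at h
    exact h
  rcases Nat.eq_zero_or_pos Sf.card with hs0 | hs1
  · have : Sf = ∅ := Finset.card_eq_zero.mp hs0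
    have hU0 : U = 0 := by rw [hU, this, Finset.sum_empty]
    rw [habs, ← hUV, hU0]; linarith
  rcases Nat.eq_zero_or_pos Tf.card with ht0' | ht1'
  · have : Tf = ∅ := Finset.card_eq_zero.mp ht0'
    have hV0 : V = 0 := by rw [hV, this, Finset.sum_empty]
    rw [habs, hUV, hV0]; linarith
  -- main case
  set s := Sf.card with hscard
  have hsm : s + 1 ≤ m := by omega
  have hTcard : Tf.card = m - s := by omega
  set A := ∑ j ∈ Sf, a j with hA
  set B := ∑ j ∈ Tf, a j with hB
  have hAB : A + B = 1 := by rw [hA, hB, hsplit (fun j => a j), hsa]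
  have hA0 : 0 ≤ A := Finset.sum_nonneg (fun j _ => ha0 j)
  have hB0 : 0 ≤ B := Finset.sum_nonneg (fun j _ => ha0 j)
  have hA1 : A ≤ 1 := by linarith
  have hcsS : A^2 ≤ (s:ℝ) * ∑ j ∈ Sf, (a j)^2 := by
    have h := sq_sum_le_card_mul_sum_sq (s := Sf) (f := a)
    exact_mod_cast h
  have hcsT : B^2 ≤ ((Tf.card):ℝ) * ∑ j ∈ Tf, (a j)^2 := by
    have h := sq_sum_le_card_mul_sum_sq (s := Tf) (f := a)
    exact_mod_cast h
  have hsR : (0:ℝ) < (s:ℝ) := by exact_mod_cast hs1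
  have htR : (0:ℝ) < ((Tf.card):ℝ) := by exact_mod_cast ht1'
  have hQS : A^2/(s:ℝ) ≤ ∑ j ∈ Sf, (a j)^2 := by
    rw [div_le_iff₀ hsR]
    linarith [hcsS]
  have hQT : B^2/((Tf.card):ℝ) ≤ ∑ j ∈ Tf, (a j)^2 := by
    rw [div_le_iff₀ htR]
    linarith [hcsT]
  have hUb : U ≤ (s:ℝ)*(1-t) + t*A - A^2/(s:ℝ) := by
    have h1 : U ≤ ∑ j ∈ Sf, ((1 - t + a j) * (1 - a j)) :=
      Finset.sum_le_sum (fun j _ => h3 j)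
    have heq : ∑ j ∈ Sf, ((1 - t + a j) * (1 - a j))
        = (s:ℝ)*(1-t) + t*A - ∑ j ∈ Sf, (a j)^2 := by
      have hptw : ∀ j ∈ Sf, (1 - t + a j) * (1 - a j) = (1-t) + (t * a j - (a j)^2) := by
        intro j _; ring
      rw [Finset.sum_congr rfl hptw, Finset.sum_add_distrib, Finset.sum_const,
        Finset.sum_sub_distrib, ← Finset.mul_sum, nsmul_eq_mul, ← hA, ← hscard]
      ring
    rw [heq] at h1
    linarith [hQS]
  have hVb : V ≤ t*B - B^2/(((m-s:ℕ)):ℝ) := by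
    have h1 : V ≤ ∑ j ∈ Tf, (a j * (t - a j)) :=
      Finset.sum_le_sum (fun j _ => h2 j)
    have heq : ∑ j ∈ Tf, (a j * (t - a j)) = t*B - ∑ j ∈ Tf, (a j)^2 := by
      have hptw : ∀ j ∈ Tf, a j * (t - a j) = t * a j - (a j)^2 := by
        intro j _; ring
      rw [Finset.sum_congr rfl hptw, Finset.sum_sub_distrib, ← Finset.mul_sum, ← hB]
    rw [heq] at h1
    rw [← hTcard]
    linarith [hQT]
  have hBA : B = 1 - A := by linarith
  rcases key s hs1 hsm A hA0 hA1 with hk | hk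
  · rw [habs, ← hUV]
    linarith [hUb]
  · rw [habs, hUV]
    rw [hBA] at hVb
    linarith [hVb]


set_option maxHeartbeats 2000000 in
lemma ladder_key_disj (m : ℕ) (C t : ℝ) (hm : m = 4 ∧ C = 1 ∨ m = 5 ∧ C = 3/2 ∨ m = 6 ∧ C = 5/3)
    (ht0 : 0 ≤ t) (ht1 : t ≤ 1) :
    ∀ s : ℕ, 1 ≤ s → s + 1 ≤ m → ∀ A : ℝ, 0 ≤ A → A ≤ 1 →
      2*((s:ℝ)*(1-t) + t*A - A^2/(s:ℝ)) ≤ C ∨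
      2*(t*(1-A) - (1-A)^2/(((m-s : ℕ)):ℝ)) ≤ C := by
  intro s hs1 hsm A hA0 hA1
  rcases hm with ⟨rfl, rfl⟩ | ⟨rfl, rfl⟩ | ⟨rfl, rfl⟩
  · have hup : s ≤ 3 := by omega
    interval_cases s <;>
    · by_contra h
      push_neg at h
      obtain ⟨h1, h2⟩ := h
      norm_num at h1 h2
      nlinarith [sq_nonneg (A-t), sq_nonneg (1-A), sq_nonneg (t-1), sq_nonneg A,
        sq_nonneg (A+t-1), mul_nonneg hA0 ht0]
  · have hup : s ≤ 4 := by omega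
    interval_cases s <;>
    · by_contra h
      push_neg at h
      obtain ⟨h1, h2⟩ := h
      norm_num at h1 h2
      nlinarith [sq_nonneg (A-t), sq_nonneg (1-A), sq_nonneg (t-1), sq_nonneg A,
        sq_nonneg (A+t-1), mul_nonneg hA0 ht0]
  · have hup : s ≤ 5 := by omega
    interval_cases s <;>
    · by_contra h
      push_neg at h
      obtain ⟨h1, h2⟩ := h
      norm_num at h1 h2
      nlinarith [sq_nonneg (A-t), sq_nonneg (1-A), sq_nonneg (t-1), sq_nonneg A,
        sq_nonneg (A+t-1), mul_nonneg hA0 ht0]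

lemma ladder_approx_general (n : ℕ) (hn : 0 < n) {m : ℕ} (C : ℝ) (hC : 0 ≤ C)
    (P : Fin n → Fin m → ℝ) (hP : IsProfile P) (t : ℝ) (hNP : IsNormPoint (ladder n) P t)
    (key : ∀ s : ℕ, 1 ≤ s → s + 1 ≤ m → ∀ A : ℝ, 0 ≤ A → A ≤ 1 →
      2*((s:ℝ)*(1-t) + t*A - A^2/(s:ℝ)) ≤ C ∨
      2*(t*(1-A) - (1-A)^2/(((m-s : ℕ)):ℝ)) ≤ C) :
    ∑ j, |output (ladder n) P t j - mean P j| ≤ C := by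
  obtain ⟨⟨ht0, ht1⟩, hnorm⟩ := hNP
  obtain ⟨hPmem, hProw⟩ := hP
  have hnR : (0:ℝ) < n := by exact_mod_cast hn
  have hfacts : ∀ j, 0 ≤ output (ladder n) P t j ∧ output (ladder n) P t j ≤ t ∧
      output (ladder n) P t j - mean P j
        ≤ output (ladder n) P t j * (t - output (ladder n) P t j) ∧
      mean P j - output (ladder n) P t j
        ≤ (1 - t + output (ladder n) P t j) * (1 - output (ladder n) P t j) := by
    intro j
    exact proj_facts n hn t ht0 ht1 (fun i => P i j) (fun i => hPmem i j)
  have hsa : ∑ j, output (ladder n) P t j = 1 := hnorm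
  have hsp : ∑ j, mean P j = 1 := by
    unfold mean
    rw [← Finset.sum_div, Finset.sum_comm]
    have : ∀ i : Fin n, ∑ j, P i j = 1 := hProw
    rw [Finset.sum_congr rfl (fun i _ => this i), Finset.sum_const, Finset.card_univ,
      Fintype.card_fin, nsmul_eq_mul, mul_one, div_self (ne_of_gt hnR)]
  have habs : ∀ j, |mean P j - output (ladder n) P t j|
      = |output (ladder n) P t j - mean P j| := fun j => abs_sub_comm _ _
  calc ∑ j, |output (ladder n) P t j - mean P j|
      = ∑ j, |mean P j - output (ladder n) P t j| := by
        exact Finset.sum_congr rfl (fun j _ => (habs j).symm)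
  _ ≤ C := by
      apply abstract_bound C t (fun j => output (ladder n) P t j) (fun j => mean P j)
        ht0 ht1 (fun j => (hfacts j).1) hsa hsp
        (fun j => (hfacts j).2.2.1) (fun j => (hfacts j).2.2.2) hC key

/-- The Ladder mechanism is `1`-approximate for `m = 4`,
`3/2`-approximate for `m = 5`, and `5/3`-approximate for `m = 6`. -/
theorem ladder_l1_approx_four_five_six (n : ℕ) (hn : 0 < n) :
    (∀ P : Fin n → Fin 4 → ℝ, IsProfile P →
      ∀ t, IsNormPoint (ladder n) P t →
        ∑ j, |output (ladder n) P t j - mean P j| ≤ 1) ∧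
    (∀ P : Fin n → Fin 5 → ℝ, IsProfile P →
      ∀ t, IsNormPoint (ladder n) P t →
        ∑ j, |output (ladder n) P t j - mean P j| ≤ 3 / 2) ∧
    (∀ P : Fin n → Fin 6 → ℝ, IsProfile P →
      ∀ t, IsNormPoint (ladder n) P t →
        ∑ j, |output (ladder n) P t j - mean P j| ≤ 5 / 3) := by
  refine ⟨?_, ?_, ?_⟩
  · intro P hP t ht
    exact ladder_approx_general n hn 1 (by norm_num) P hP t ht
      (ladder_key_disj 4 1 t (Or.inl ⟨rfl, rfl⟩) ht.1.1 ht.1.2)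
  · intro P hP t ht
    exact ladder_approx_general n hn (3/2) (by norm_num) P hP t ht
      (ladder_key_disj 5 (3/2) t (Or.inr (Or.inl ⟨rfl, rfl⟩)) ht.1.1 ht.1.2)
  · intro P hP t ht
    exact ladder_approx_general n hn (5/3) (by norm_num) P hP t ht
      (ladder_key_disj 6 (5/3) t (Or.inr (Or.inr ⟨rfl, rfl⟩)) ht.1.1 ht.1.2)
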